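/- arXiv:2303.00259 — 3 statements merged into one kernel-verified Lean document; each statement's English description precedes it below -/
import Mathlib

section
/- Fix d ≥ 1, ranges [l_i, h_i] with 0 ≤ l_i ≤ h_i for 1 ≤ i ≤ d−1, and points t, s ∈ R^d. Let h'(r) = Σ_{i=1}^{d−1} (s[i] − t[i])·r[i] + s[d] − t[d] for r in the box R = Π [l_i, h_i], and let h(ω) = Σ_{i=1}^{d} (s[i] − t[i])·ω[i] over the region Ω = {ω ∈ R^d : ω[d] > 0, Σ ω[i] = 1, l_i ≤ ω[i]/ω[d] ≤ h_i for i < d}. Then min over R of h' is ≥ 0 if and only if inf over Ω of h is ≥ 0. -/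
/-!
Both problems are the same linear form `c = s - t` evaluated on rays of the cone `ω (last) > 0`:
every such `ω` equals `ω (last) • (r, 1)` with `r i = ω i / ω (last)`, and conversely `(r, 1)`
rescaled by `(∑ r + 1)⁻¹` lies on the simplex when `r ≥ 0`. Since `⟪c, a • (r, 1)⟫ = a * h'(r)`
and `a > 0`, the two sign conditions agree.
-/

open Finset

section Homogenize

variable {K : Type*} {n : ℕ}

lemma sum_mul_smul_snoc_one [Field K] (c : Fin (n + 1) → K) (a : K) (r : Fin n → K) :
    ∑ i, c i * (a • (Fin.snoc r 1 : Fin (n + 1) → K)) i =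
      a * (∑ i, c i.castSucc * r i + c (Fin.last n)) := by
  simp only [Fin.sum_univ_castSucc, Pi.smul_apply, Fin.snoc_castSucc, Fin.snoc_last, smul_eq_mul,
    mul_add, mul_sum, mul_one, mul_left_comm (c _)]

lemma eq_last_smul_snoc_div_last [Field K] (ω : Fin (n + 1) → K) (h : ω (Fin.last n) ≠ 0) :
    ω = ω (Fin.last n) • (Fin.snoc (fun i ↦ ω i.castSucc / ω (Fin.last n)) 1 : Fin (n + 1) → K) := by
  ext i
  induction i using Fin.lastCases <;> simp [mul_div_cancel₀ _ h]

lemma smul_snoc_one_castSucc_div_last [Field K] {a : K} (ha : a ≠ 0) (r : Fin n → K) (i : Fin n) :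
    (a • (Fin.snoc r 1 : Fin (n + 1) → K)) i.castSucc /
      (a • (Fin.snoc r 1 : Fin (n + 1) → K)) (Fin.last n) = r i := by
  simp [mul_div_cancel_left₀ _ ha]

lemma inv_sum_add_one_smul_snoc_one_mem_stdSimplex [Field K] [LinearOrder K]
    [IsStrictOrderedRing K] {r : Fin n → K} (hr : ∀ i, 0 ≤ r i) :
    (∑ i, r i + 1)⁻¹ • (Fin.snoc r 1 : Fin (n + 1) → K) ∈ stdSimplex K (Fin (n + 1)) := by
  have hpos : 0 < ∑ i, r i + 1 := by linarith [sum_nonneg fun i (_ : i ∈ univ) ↦ hr i]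
  refine ⟨fun i ↦ ?_, ?_⟩
  · induction i using Fin.lastCases <;> simp [mul_nonneg, hr, hpos.le]
  · simp only [Pi.smul_apply, smul_eq_mul, ← mul_sum, Fin.sum_snoc, inv_mul_cancel₀ hpos.ne']

end Homogenize

theorem box_min_nonneg_iff_simplex_inf_nonneg_general (n : ℕ)
    (l h : Fin n → ℝ) (hl : ∀ i, 0 ≤ l i)
    (t s : Fin (n + 1) → ℝ) :
    (∀ r : Fin n → ℝ, (∀ i, l i ≤ r i ∧ r i ≤ h i) →
      0 ≤ (∑ i, (s i.castSucc - t i.castSucc) * r i) + (s (Fin.last n) - t (Fin.last n))) ↔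
    (∀ ω : Fin (n + 1) → ℝ, (∀ i, 0 ≤ ω i) → (∑ i, ω i) = 1 →
      0 < ω (Fin.last n) →
      (∀ i : Fin n, l i ≤ ω i.castSucc / ω (Fin.last n) ∧
        ω i.castSucc / ω (Fin.last n) ≤ h i) →
      0 ≤ ∑ i, (s i - t i) * ω i) := by
  constructor
  · intro hbox ω _ _ hlast hratio
    rw [eq_last_smul_snoc_div_last ω hlast.ne', sum_mul_smul_snoc_one]
    exact mul_nonneg hlast.le (hbox _ hratio)
  · intro hsimplex r hr
    have hr₀ : ∀ i, 0 ≤ r i := fun i ↦ (hl i).trans (hr i).1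
    have hpos : 0 < ∑ i, r i + 1 := by linarith [sum_nonneg fun i (_ : i ∈ univ) ↦ hr₀ i]
    have ha := inv_pos.2 hpos
    obtain ⟨hω₀, hω₁⟩ := inv_sum_add_one_smul_snoc_one_mem_stdSimplex hr₀
    have hvalue := hsimplex _ hω₀ hω₁ (by simpa using hpos)
      (fun i ↦ by rw [smul_snoc_one_castSucc_div_last ha.ne']; exact hr i)
    rw [sum_mul_smul_snoc_one] at hvalue
    exact nonneg_of_mul_nonneg_right hvalue ha

/-- Key lemma: the box LP h' is nonnegative on the box iff the simplex LP h is
nonnegative on the weight-ratio constrained region (d = n + 1 dimensions). -/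
theorem box_min_nonneg_iff_simplex_inf_nonneg (n : ℕ)
    (l h : Fin n → ℝ) (hl : ∀ i, 0 ≤ l i) (hlh : ∀ i, l i ≤ h i)
    (t s : Fin (n + 1) → ℝ) :
    (∀ r : Fin n → ℝ, (∀ i, l i ≤ r i ∧ r i ≤ h i) →
      0 ≤ (∑ i, (s i.castSucc - t i.castSucc) * r i) + (s (Fin.last n) - t (Fin.last n))) ↔
    (∀ ω : Fin (n + 1) → ℝ, (∀ i, 0 ≤ ω i) → (∑ i, ω i) = 1 →
      0 < ω (Fin.last n) →
      (∀ i : Fin n, l i ≤ ω i.castSucc / ω (Fin.last n) ∧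
        ω i.castSucc / ω (Fin.last n) ≤ h i) →
      0 ≤ ∑ i, (s i - t i) * ω i) :=
  box_min_nonneg_iff_simplex_inf_nonneg_general n l h hl t s
end

section
/- Let F = {S_ω : ω ∈ S^{d−1}, ω[d] > 0, l_i ≤ ω[i]/ω[d] ≤ h_i for 1 ≤ i < d} with 0 ≤ l_i ≤ h_i. Then t F-dominates s if and only if t[d] − s[d] ≤ Σ_{i=1}^{d−1} c_i·(s[i] − t[i]), where c_i = l_i if s[i] > t[i] and c_i = h_i otherwise. -/
open Finset

/-!
Dividing by `ω (Fin.last n)` turns the dominance test for a single weight vector into the linear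
inequality `t[d] - s[d] ≤ ∑ rᵢ (s[i] - t[i])` in the ratios `rᵢ = ω[i] / ω[d]`, and every
nonnegative ratio vector arises from a point of the simplex. The ratios range over the box
`∏ [lᵢ, hᵢ]`, on which the right-hand side is minimised coordinatewise: at `lᵢ` where
`s[i] - t[i] > 0` and at `hᵢ` otherwise.
-/

lemma ite_lt_mul_sub_le_mul_sub {a b l h r : ℝ} (hlr : l ≤ r) (hrh : r ≤ h) :
    (if a < b then l else h) * (b - a) ≤ r * (b - a) := by
  split_ifs with hab
  · exact mul_le_mul_of_nonneg_right hlr (by linarith)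
  · exact mul_le_mul_of_nonpos_right hrh (by linarith)

lemma sum_mul_le_sum_mul_iff_of_last_pos {n : ℕ} (ω t s : Fin (n + 1) → ℝ)
    (hω : 0 < ω (Fin.last n)) :
    (∑ i, ω i * t i ≤ ∑ i, ω i * s i) ↔
      t (Fin.last n) - s (Fin.last n) ≤
        ∑ i : Fin n, ω i.castSucc / ω (Fin.last n) * (s i.castSucc - t i.castSucc) := by
  have hratio : ∑ i : Fin n, ω i.castSucc / ω (Fin.last n) * (s i.castSucc - t i.castSucc) =
      (∑ i : Fin n, ω i.castSucc * (s i.castSucc - t i.castSucc)) / ω (Fin.last n) := by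
    rw [sum_div]
    exact sum_congr rfl fun i _ => by ring
  have hdiff : ∑ i, ω i * s i - ∑ i, ω i * t i =
      ∑ i : Fin n, ω i.castSucc * (s i.castSucc - t i.castSucc) +
        ω (Fin.last n) * (s (Fin.last n) - t (Fin.last n)) := by
    rw [← sum_sub_distrib, Fin.sum_univ_castSucc]
    simp only [mul_sub]
  rw [hratio, le_div_iff₀ hω, ← sub_nonneg, hdiff]
  constructor <;> intro h <;> linarith

lemma exists_simplex_weight_with_ratios {n : ℕ} (r : Fin n → ℝ) (hr : ∀ i, 0 ≤ r i) :
    ∃ ω : Fin (n + 1) → ℝ, (∀ i, 0 ≤ ω i) ∧ ∑ i, ω i = 1 ∧ 0 < ω (Fin.last n) ∧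
      ∀ i, ω i.castSucc / ω (Fin.last n) = r i := by
  have hD : 0 < 1 + ∑ i, r i := by linarith [sum_nonneg fun i (_ : i ∈ univ) => hr i]
  refine ⟨fun j => Fin.snoc (α := fun _ => ℝ) r 1 j / (1 + ∑ i, r i), fun j => ?_, ?_, ?_, ?_⟩
  · refine Fin.lastCases ?_ (fun i => ?_) j
    · simp only [Fin.snoc_last]; positivity
    · simp only [Fin.snoc_castSucc]; exact div_nonneg (hr i) hD.le
  · rw [← sum_div, Fin.sum_univ_castSucc]
    simp only [Fin.snoc_castSucc, Fin.snoc_last]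
    rw [add_comm, div_self hD.ne']
  · simp only [Fin.snoc_last]; positivity
  · intro i
    simp only [Fin.snoc_castSucc, Fin.snoc_last]
    field_simp

/-- Efficient F-dominance test under weight ratio constraints (Theorem 6):
t F-dominates s iff a single linear inequality with coefficients chosen from
the range endpoints holds. -/
theorem efficient_fDominance_test (n : ℕ)
    (l h : Fin n → ℝ) (hl : ∀ i, 0 ≤ l i) (hlh : ∀ i, l i ≤ h i)
    (t s : Fin (n + 1) → ℝ) :
    (∀ ω : Fin (n + 1) → ℝ, (∀ i, 0 ≤ ω i) → (∑ i, ω i) = 1 →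
      0 < ω (Fin.last n) →
      (∀ i : Fin n, l i ≤ ω i.castSucc / ω (Fin.last n) ∧
        ω i.castSucc / ω (Fin.last n) ≤ h i) →
      (∑ i, ω i * t i) ≤ ∑ i, ω i * s i) ↔
    t (Fin.last n) - s (Fin.last n) ≤
      ∑ i, (if t i.castSucc < s i.castSucc then l i else h i) *
        (s i.castSucc - t i.castSucc) := by
  set c : Fin n → ℝ := fun i => if t i.castSucc < s i.castSucc then l i else h i
  have hlc : ∀ i, l i ≤ c i := fun i => by
    simp only [c]; split_ifs <;> linarith [hlh i]
  have hch : ∀ i, c i ≤ h i := fun i => by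
    simp only [c]; split_ifs <;> linarith [hlh i]
  constructor
  · intro hdom
    obtain ⟨ω, hω0, hω1, hωlast, hωc⟩ :=
      exists_simplex_weight_with_ratios c fun i => (hl i).trans (hlc i)
    have := (sum_mul_le_sum_mul_iff_of_last_pos ω t s hωlast).1 <|
      hdom ω hω0 hω1 hωlast fun i => by rw [hωc]; exact ⟨hlc i, hch i⟩
    simpa only [hωc] using this
  · intro hc ω _ _ hωlast hratio
    refine (sum_mul_le_sum_mul_iff_of_last_pos ω t s hωlast).2 (hc.trans ?_)
    exact sum_le_sum fun i _ => ite_lt_mul_sub_le_mul_sub (hratio i).1 (hratio i).2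
end

section
/- Let T_1, ..., T_m be disjoint finite sets of instances with probabilities as above, and let ≺ be a transitive, irreflexive, asymmetric dominance relation. Define Pr_rsky(t) = p(t)·Π_{j≠i}(1 − Σ_{s∈T_j, s≺t} p(s)) for t ∈ T_i, where p(t) > 0 for all instances. If t ∈ T_i satisfies Pr_rsky(t) = 0 and s ∈ T_j (j ≠ i) satisfies t ≺ s, then Pr_rsky(s) = 0. -/
open Finset
open scoped Classical

/-! If `Pr_rsky(t) = 0`, some other object `T_j` has dominating mass `1` at `t`; since the
instances of `T_j` have positive probabilities summing to at most `1`, every one of them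
dominates `t`. Asymmetry then rules out `s ∈ T_j`, and by transitivity all of `T_j` also
dominates `s`, so the `j`-factor of `Pr_rsky(s)` vanishes. -/

theorem Finset.prop_of_sum_le_sum_filter {α M : Type*} [AddCommMonoid M] [PartialOrder M]
    [IsOrderedCancelAddMonoid M] {s : Finset α} {f : α → M} {P : α → Prop} [DecidablePred P]
    (hf : ∀ x ∈ s, 0 ≤ f x) (h : ∑ x ∈ s, f x ≤ ∑ x ∈ s with P x, f x)
    {x : α} (hx : x ∈ s) (hfx : 0 < f x) : P x := by
  by_contra hPx
  have hfx_le : f x ≤ ∑ y ∈ s with ¬P y, f y :=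
    single_le_sum (fun y hy => hf y (mem_filter.1 hy).1) (mem_filter.2 ⟨hx, hPx⟩)
  have : ∑ y ∈ s with P y, f y < ∑ y ∈ s, f y :=
    calc ∑ y ∈ s with P y, f y
        < ∑ y ∈ s with P y, f y + f x := lt_add_of_pos_right _ hfx
      _ ≤ ∑ y ∈ s with P y, f y + ∑ y ∈ s with ¬P y, f y := by gcongr
      _ = ∑ y ∈ s, f y := sum_filter_add_sum_filter_not s P f
  exact (h.trans_lt this).false

section DominatingMass

variable {ι κ : Type*} [Fintype ι] [DecidableEq κ] (obj : ι → κ) (p : ι → ℝ)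
  (prec : ι → ι → Prop)

noncomputable def dominatingMass (j : κ) (x : ι) : ℝ :=
  ∑ s ∈ univ.filter (fun s => obj s = j ∧ prec s x), p s

variable {obj p prec}

theorem exists_dominatingMass_eq_one [Fintype κ] {x : ι} (hpx : p x ≠ 0)
    (h : p x * ∏ j ∈ univ.erase (obj x), (1 - dominatingMass obj p prec j x) = 0) :
    ∃ j ≠ obj x, dominatingMass obj p prec j x = 1 := by
  obtain ⟨j, hj, hj0⟩ := prod_eq_zero_iff.1 ((mul_eq_zero.1 h).resolve_left hpx)
  exact ⟨j, ne_of_mem_erase hj, (sub_eq_zero.1 hj0).symm⟩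

theorem dominatingMass_le_one (hp : ∀ x, 0 ≤ p x)
    {j : κ} (hsum : ∑ x ∈ univ.filter (fun x => obj x = j), p x ≤ 1) (x : ι) :
    dominatingMass obj p prec j x ≤ 1 :=
  (sum_le_sum_of_subset_of_nonneg (monotone_filter_right _ fun _ _ h => h.1)
    fun y _ _ => hp y).trans hsum

theorem dominatingMass_mono (htrans : ∀ a b c, prec a b → prec b c → prec a c)
    {t s : ι} (hts : prec t s) (hp : ∀ x, 0 ≤ p x) (j : κ) :
    dominatingMass obj p prec j t ≤ dominatingMass obj p prec j s :=
  sum_le_sum_of_subset_of_nonneg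
    (monotone_filter_right _ fun u _ h => ⟨h.1, htrans u t s h.2 hts⟩) fun y _ _ => hp y

theorem prec_of_dominatingMass_eq_one (hp : ∀ x, 0 < p x)
    {j : κ} (hsum : ∑ x ∈ univ.filter (fun x => obj x = j), p x ≤ 1)
    {t : ι} (h : dominatingMass obj p prec j t = 1) {u : ι} (hu : obj u = j) : prec u t := by
  have hfull : ∑ x ∈ univ.filter (fun x => obj x = j), p x ≤
      ∑ x ∈ (univ.filter (fun x => obj x = j)).filter (fun x => prec x t), p x := by
    rwa [filter_filter, ← dominatingMass, h]
  exact prop_of_sum_le_sum_filter (fun x _ => (hp x).le) hfull (by simpa using hu) (hp u)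

end DominatingMass

theorem zero_rskyline_prob_propagates_general (m : ℕ) (ι : Type) [Fintype ι]
    (obj : ι → Fin m) (p : ι → ℝ)
    (hp : ∀ x, 0 < p x ∧ p x ≤ 1)
    (hsum : ∀ j : Fin m, (∑ x ∈ univ.filter (fun x => obj x = j), p x) ≤ 1)
    (prec : ι → ι → Prop)
    (htrans : ∀ a b c, prec a b → prec b c → prec a c)
    (hasym : ∀ a b, prec a b → ¬ prec b a)
    (Prrsky : ι → ℝ)
    (hPr : ∀ x, Prrsky x = p x * ∏ j ∈ univ.erase (obj x),
        (1 - ∑ s ∈ univ.filter (fun s => obj s = j ∧ prec s x), p s))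
    (t s : ι) (hts : prec t s) (h0 : Prrsky t = 0) :
    Prrsky s = 0 := by
  have hpos : ∀ x, 0 < p x := fun x => (hp x).1
  have hnonneg : ∀ x, 0 ≤ p x := fun x => (hpos x).le
  obtain ⟨j, -, hj⟩ := exists_dominatingMass_eq_one (prec := prec) (hpos t).ne' (hPr t ▸ h0)
  have hjs : j ≠ obj s := fun hsj =>
    hasym t s hts (prec_of_dominatingMass_eq_one hpos (hsum j) hj hsj.symm)
  have hj_s : dominatingMass obj p prec j s = 1 :=
    le_antisymm (dominatingMass_le_one hnonneg (hsum j) s)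
      (hj ▸ dominatingMass_mono htrans hts hnonneg j)
  rw [hPr s]
  exact mul_eq_zero_of_right _
    (prod_eq_zero (mem_erase.2 ⟨hjs, mem_univ _⟩) (sub_eq_zero.2 hj_s.symm))

/-- Instances with zero rskyline probability can be safely discarded:
zero rskyline probability propagates along the dominance relation to
instances of other objects. -/
theorem zero_rskyline_prob_propagates (m : ℕ) (ι : Type) [Fintype ι]
    (obj : ι → Fin m) (p : ι → ℝ)
    (hp : ∀ x, 0 < p x ∧ p x ≤ 1)
    (hsum : ∀ j : Fin m, (∑ x ∈ univ.filter (fun x => obj x = j), p x) ≤ 1)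
    (prec : ι → ι → Prop)
    (htrans : ∀ a b c, prec a b → prec b c → prec a c)
    (hirr : ∀ a, ¬ prec a a)
    (hasym : ∀ a b, prec a b → ¬ prec b a)
    (Prrsky : ι → ℝ)
    (hPr : ∀ x, Prrsky x = p x * ∏ j ∈ univ.erase (obj x),
        (1 - ∑ s ∈ univ.filter (fun s => obj s = j ∧ prec s x), p s))
    (t s : ι) (hne : obj s ≠ obj t) (hts : prec t s) (h0 : Prrsky t = 0) :
    Prrsky s = 0 :=
  zero_rskyline_prob_propagates_general m ι obj p hp hsum prec htrans hasym Prrsky hPr t s hts h0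
end
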